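/- Fix integers V ≥ 2 and d ≥ 1, identify the alphabet with Fin V with a distinguished mask symbol M, and for t > 0 let K_t be the masking channel on Fin V given by K_t(·|M) = δ_M and, for x ≠ M, K_t(y|x) = e^{−t} δ_{y=x} + (1 − e^{−t}) δ_{y=M}. Let q_0 be any probability mass function on (Fin V)^d, let q_t(y) = Σ_x q_0(x) ∏_{i=1}^d K_t(y_i | x_i), and let p_init be the product distribution on (Fin V)^d whose every coordinate is ν_{e^{−t}}, where ν_ε(M) = 1 − ε and ν_ε(j) = ε/(V−1) for j ≠ M. Then for every t ≥ log 2, KL(q_t ‖ p_init) ≤ d · e^{−t} · (log(V − 1) + 2). -/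

import Mathlib

/-!
The corrupted law `q_t` is the mixture over `x ∼ q_0` of the product kernels `∏ᵢ K_t(· | xᵢ)`, so
by convexity of `u ↦ u log u` (the log-sum inequality) its divergence from `p_init` is at most the
`q_0`-average of the divergences of these product kernels. Against a product reference the
divergence of a product law splits into the sum of the `d` per-token divergences. With
`ε = e⁻ᵗ`, a masked token contributes `-log (1 - ε) ≤ 2ε` and an unmasked one `ε log (V - 1)`.
-/

open Finset

/-- The masking channel of a masked diffusion model at time `t`: a mask token stays
masked; a non-mask token `x` survives with probability `e⁻ᵗ` and is replaced by the
mask symbol `M` with probability `1 - e⁻ᵗ`. -/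
noncomputable def maskKernel (V : ℕ) (M : Fin V) (t : ℝ) (x y : Fin V) : ℝ :=
  if x = M then (if y = M then 1 else 0)
  else if y = x then Real.exp (-t) else if y = M then 1 - Real.exp (-t) else 0

/-- The non-stationary per-token initialization distribution of Assumption A.1:
mass `1 - ε` on the mask symbol and mass `ε` spread uniformly over the other
`V - 1` symbols. -/
noncomputable def nuEps (V : ℕ) (M : Fin V) (ε : ℝ) (y : Fin V) : ℝ :=
  if y = M then 1 - ε else ε / ((V : ℝ) - 1)

open Real

noncomputable def discreteKL {β : Type*} [Fintype β] (p q : β → ℝ) : ℝ :=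
  ∑ y, p y * log (p y / q y)

section Mixture

variable {α β : Type*} [Fintype α] [Fintype β]

theorem sum_mul_mul_log_div_le (w a : α → ℝ) (hw0 : ∀ x, 0 ≤ w x) (hw1 : ∑ x, w x = 1)
    (ha : ∀ x, 0 ≤ a x) {c : ℝ} (hc : 0 < c) :
    (∑ x, w x * a x) * log ((∑ x, w x * a x) / c) ≤ ∑ x, w x * (a x * log (a x / c)) := by
  have jensen := convexOn_mul_log.map_sum_le (t := univ) (w := w) (p := fun x => a x / c)
    (fun x _ => hw0 x) hw1 (fun x _ => Set.mem_Ici.mpr (div_nonneg (ha x) hc.le))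
  simp only [smul_eq_mul, ← mul_div_assoc, ← Finset.sum_div] at jensen
  have cancel : ∀ b L, c * (b / c * L) = b * L := fun b L => by
    rw [← mul_assoc, mul_div_cancel₀ _ hc.ne']
  have scaled := mul_le_mul_of_nonneg_left jensen hc.le
  simp only [Finset.mul_sum, mul_left_comm c (w _), cancel] at scaled
  exact scaled

theorem discreteKL_mixture_le (w : α → ℝ) (hw0 : ∀ x, 0 ≤ w x) (hw1 : ∑ x, w x = 1)
    (P : α → β → ℝ) (hP : ∀ x y, 0 ≤ P x y) (q : β → ℝ) (hq : ∀ y, 0 < q y) :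
    discreteKL (fun y => ∑ x, w x * P x y) q ≤ ∑ x, w x * discreteKL (P x) q := by
  calc discreteKL (fun y => ∑ x, w x * P x y) q
      ≤ ∑ y, ∑ x, w x * (P x y * log (P x y / q y)) :=
        Finset.sum_le_sum fun y _ =>
          sum_mul_mul_log_div_le w (P · y) hw0 hw1 (hP · y) (hq y)
    _ = ∑ x, w x * discreteKL (P x) q := by
        rw [Finset.sum_comm]
        simp only [discreteKL, Finset.mul_sum]

end Mixture

section Product

variable {ι β : Type*} [Fintype ι] [DecidableEq ι] [Fintype β]

theorem sum_prod_mul_apply_eq (P : ι → β → ℝ) (hP : ∀ j, ∑ z, P j z = 1) (i : ι)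
    (f : β → ℝ) :
    ∑ y : ι → β, (∏ j, P j (y j)) * f (y i) = ∑ z, P i z * f z := by
  set G : ι → β → ℝ := fun j z => P j z * if j = i then f z else 1
  have hG : ∀ y : ι → β, (∏ j, P j (y j)) * f (y i) = ∏ j, G j (y j) := by
    intro y
    rw [Finset.prod_mul_distrib, Fintype.prod_ite_eq' i fun j => f (y j)]
  have hsumG : ∀ j, ∑ z, G j z = if j = i then ∑ z, P i z * f z else 1 := by
    intro j
    by_cases hj : j = i
    · subst hj; simp [G]
    · simp [G, hj, hP]
  rw [Finset.sum_congr rfl fun y _ => hG y, ← Fintype.prod_sum,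
    Finset.prod_congr rfl fun j _ => hsumG j]
  simp

theorem discreteKL_pi (P q : ι → β → ℝ) (hP : ∀ j, ∑ z, P j z = 1)
    (hq : ∀ j z, q j z ≠ 0) :
    discreteKL (fun y : ι → β => ∏ j, P j (y j)) (fun y => ∏ j, q j (y j)) =
      ∑ j, discreteKL (P j) (q j) := by
  have log_split : ∀ y : ι → β,
      (∏ j, P j (y j)) * log ((∏ j, P j (y j)) / ∏ j, q j (y j)) =
        ∑ j, (∏ k, P k (y k)) * log (P j (y j) / q j (y j)) := by
    intro y
    by_cases hzero : ∏ j, P j (y j) = 0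
    · simp [hzero]
    · rw [← Finset.mul_sum, ← Finset.prod_div_distrib, log_prod fun j _ =>
        div_ne_zero (fun h => hzero (Finset.prod_eq_zero (Finset.mem_univ j) h)) (hq j (y j))]
  unfold discreteKL
  rw [Finset.sum_congr rfl fun y _ => log_split y, Finset.sum_comm]
  exact Finset.sum_congr rfl fun j _ =>
    sum_prod_mul_apply_eq P hP j fun z => log (P j z / q j z)

end Product

theorem neg_log_one_sub_le_two_mul {ε : ℝ} (hε0 : 0 ≤ ε) (hε : ε ≤ 1 / 2) :
    -log (1 - ε) ≤ 2 * ε := by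
  have hpos : 0 < 1 - ε := by linarith
  have hlog := log_le_sub_one_of_pos (inv_pos.mpr hpos)
  have hinv : (1 - ε)⁻¹ ≤ 1 + 2 * ε := by
    rw [inv_le_iff_one_le_mul₀ hpos]
    nlinarith
  rw [log_inv] at hlog
  linarith

section Masking

variable {V : ℕ} (M : Fin V)

theorem maskKernel_nonneg {t : ℝ} (ht : 0 ≤ t) (x y : Fin V) : 0 ≤ maskKernel V M t x y := by
  have hε : exp (-t) ≤ 1 := exp_le_one_iff.mpr (by linarith)
  unfold maskKernel
  split_ifs <;> linarith [exp_pos (-t)]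

theorem sum_maskKernel (t : ℝ) (x : Fin V) : ∑ y, maskKernel V M t x y = 1 := by
  unfold maskKernel
  by_cases hx : x = M
  · simp [hx]
  · rw [Finset.sum_eq_add_of_mem x M (mem_univ x) (mem_univ M) hx fun y _ hy => by simp [hy]]
    simp [hx, Ne.symm hx]

theorem nuEps_pos (hV : 2 ≤ V) {ε : ℝ} (hε0 : 0 < ε) (hε1 : ε < 1) (y : Fin V) :
    0 < nuEps V M ε y := by
  have hV' : (2 : ℝ) ≤ V := by exact_mod_cast hV
  unfold nuEps
  split_ifs
  · linarith
  · exact div_pos hε0 (by linarith)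

theorem discreteKL_maskKernel_self (t : ℝ) :
    discreteKL (maskKernel V M t M) (nuEps V M (exp (-t))) = -log (1 - exp (-t)) := by
  rw [discreteKL, Finset.sum_eq_single M]
  · simp [maskKernel, nuEps]
  · intro y _ hy; simp [maskKernel, hy]
  · simp

theorem discreteKL_maskKernel_of_ne (t : ℝ) {x : Fin V} (hx : x ≠ M) :
    discreteKL (maskKernel V M t x) (nuEps V M (exp (-t))) = exp (-t) * log ((V : ℝ) - 1) := by
  rw [discreteKL, Finset.sum_eq_add_of_mem x M (mem_univ x) (mem_univ M) hx
    fun y _ hy => by simp [maskKernel, hx, hy]]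
  have survive : maskKernel V M t x x * log (maskKernel V M t x x / nuEps V M (exp (-t)) x) =
      exp (-t) * log ((V : ℝ) - 1) := by
    simp [maskKernel, nuEps, hx, div_div_cancel₀ (exp_pos (-t)).ne']
  have masked : maskKernel V M t x M * log (maskKernel V M t x M / nuEps V M (exp (-t)) M) = 0 := by
    rcases eq_or_ne (1 - exp (-t)) 0 with h | h <;> simp [maskKernel, nuEps, hx, Ne.symm hx, h]
  rw [survive, masked, add_zero]

theorem discreteKL_maskKernel_le (hV : 2 ≤ V) {t : ℝ} (ht : exp (-t) ≤ 1 / 2) (x : Fin V) :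
    discreteKL (maskKernel V M t x) (nuEps V M (exp (-t))) ≤
      exp (-t) * (log ((V : ℝ) - 1) + 2) := by
  have hlogV : 0 ≤ log ((V : ℝ) - 1) :=
    log_nonneg (by linarith [show (2 : ℝ) ≤ V by exact_mod_cast hV])
  have hε := exp_pos (-t)
  by_cases hx : x = M
  · rw [hx, discreteKL_maskKernel_self]
    nlinarith [neg_log_one_sub_le_two_mul hε.le ht]
  · rw [discreteKL_maskKernel_of_ne M t hx]
    nlinarith

end Masking

theorem kl_corrupted_le_explicit_general
    {V d : ℕ} (hV : 2 ≤ V) (M : Fin V) (t : ℝ)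
    (ht : Real.log 2 ≤ t)
    (q0 : (Fin d → Fin V) → ℝ)
    (hq00 : ∀ x, 0 ≤ q0 x) (hq01 : ∑ x, q0 x = 1) :
    ∑ y : Fin d → Fin V,
        (∑ x, q0 x * ∏ i, maskKernel V M t (x i) (y i)) *
          Real.log ((∑ x, q0 x * ∏ i, maskKernel V M t (x i) (y i)) /
            ∏ i, nuEps V M (Real.exp (-t)) (y i)) ≤
      (d : ℝ) * Real.exp (-t) * (Real.log ((V : ℝ) - 1) + 2) := by
  have hε : exp (-t) ≤ 1 / 2 :=
    calc exp (-t) ≤ exp (-log 2) := exp_le_exp.mpr (neg_le_neg ht)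
      _ = 1 / 2 := by rw [exp_neg, exp_log two_pos, one_div]
  have ht0 : 0 ≤ t := (log_nonneg one_le_two).trans ht
  have hν : ∀ y, 0 < nuEps V M (exp (-t)) y :=
    nuEps_pos M hV (exp_pos _) (by linarith)
  calc _ ≤ ∑ x, q0 x * discreteKL (fun y : Fin d → Fin V => ∏ i, maskKernel V M t (x i) (y i))
          (fun y => ∏ i, nuEps V M (exp (-t)) (y i)) :=
        discreteKL_mixture_le q0 hq00 hq01 _
          (fun x y => prod_nonneg fun i _ => maskKernel_nonneg M ht0 _ _) _
          (fun y => prod_pos fun i _ => hν (y i))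
    _ = ∑ x, q0 x * ∑ i, discreteKL (maskKernel V M t (x i)) (nuEps V M (exp (-t))) := by
        refine Finset.sum_congr rfl fun x _ => ?_
        rw [discreteKL_pi (fun i => maskKernel V M t (x i)) (fun _ => nuEps V M (exp (-t)))
          (fun i => sum_maskKernel M t (x i)) (fun _ y => (hν y).ne')]
    _ ≤ ∑ x, q0 x * (d * (exp (-t) * (log ((V : ℝ) - 1) + 2))) := by
        refine Finset.sum_le_sum fun x _ => mul_le_mul_of_nonneg_left ?_ (hq00 x)
        exact (Finset.sum_le_sum fun i _ => discreteKL_maskKernel_le M hV hε (x i)).trans_eq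
          (by simp)
    _ = d * exp (-t) * (log ((V : ℝ) - 1) + 2) := by
        rw [← Finset.sum_mul, hq01, one_mul, mul_assoc]

/-- Lemma A.2 (Approximate Error of the Initial State):
`KL(q_t ‖ p_init) ≤ d · e⁻ᵗ · (log (V - 1) + 2)` once `t ≥ log 2`. -/
theorem kl_corrupted_le_explicit
    {V d : ℕ} (hV : 2 ≤ V) (hd : 1 ≤ d) (M : Fin V) (t : ℝ)
    (ht : Real.log 2 ≤ t)
    (q0 : (Fin d → Fin V) → ℝ)
    (hq00 : ∀ x, 0 ≤ q0 x) (hq01 : ∑ x, q0 x = 1) :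
    ∑ y : Fin d → Fin V,
        (∑ x, q0 x * ∏ i, maskKernel V M t (x i) (y i)) *
          Real.log ((∑ x, q0 x * ∏ i, maskKernel V M t (x i) (y i)) /
            ∏ i, nuEps V M (Real.exp (-t)) (y i)) ≤
      (d : ℝ) * Real.exp (-t) * (Real.log ((V : ℝ) - 1) + 2) :=
  kl_corrupted_le_explicit_general hV M t ht q0 hq00 hq01
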